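/- The edge-weighted plabic R-matrix satisfies the braid relation: T^{(1,2)} ∘ T^{(2,3)} ∘ T^{(1,2)} = T^{(2,3)} ∘ T^{(1,2)} ∘ T^{(2,3)} as transformations of the string weights (a,b,c) of a fully generic cylindric 3-loop expanded directed plabic network. -/

import Mathlib

noncomputable section

/-- `λ_i(x,y,z)` for a pair of adjacent strings of a cylindric expanded directed plabic
network, with white-to-black edge weights `x` (left string), `y` (right string) and crossing
edge weights `z`, all indexed by `ZMod n`:
`λ_i = Σ_{j=0}^{n-1} (∏_{k=1}^{j} x_{i+k}) · z_{i+j} · (∏_{k=j+1}^{n-1} y_{i+k})`. -/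
def lam (n : ℕ) (x y z : ZMod n → ℝ) (i : ZMod n) : ℝ :=
  ∑ j ∈ Finset.range n,
    (∏ k ∈ Finset.Icc 1 j, x (i + (k : ZMod n))) * z (i + (j : ZMod n)) *
      ∏ k ∈ Finset.Icc (j + 1) (n - 1), y (i + (k : ZMod n))

/-- First component of the (generic) plabic R-matrix: `x'_i = y_{i−1} λ_{i−1}/λ_i`. -/
def Rmat1 (n : ℕ) [NeZero n] (x y z : ZMod n → ℝ) : ZMod n → ℝ := fun i =>
  y (i - 1) * lam n x y z (i - 1) / lam n x y z i

/-- Second component of the (generic) plabic R-matrix: `y'_i = x_{i+1} λ_{i+1}/λ_i`. -/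
def Rmat2 (n : ℕ) [NeZero n] (x y z : ZMod n → ℝ) : ZMod n → ℝ := fun i =>
  x (i + 1) * lam n x y z (i + 1) / lam n x y z i

/-- The plabic R-matrix applied to strings 1 and 2 of a fully generic cylindric 3-loop
expanded directed plabic network with string weights `(a,b,c)`, crossing weights `z` between
strings 1,2 and `u` between strings 2,3 (crossing weights are unchanged in the generic
case). -/
def T12 (n : ℕ) [NeZero n] (z : ZMod n → ℝ)
    (p : (ZMod n → ℝ) × (ZMod n → ℝ) × (ZMod n → ℝ)) :
    (ZMod n → ℝ) × (ZMod n → ℝ) × (ZMod n → ℝ) :=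
  (Rmat1 n p.1 p.2.1 z, Rmat2 n p.1 p.2.1 z, p.2.2)

/-- The plabic R-matrix applied to strings 2 and 3. -/
def T23 (n : ℕ) [NeZero n] (u : ZMod n → ℝ)
    (p : (ZMod n → ℝ) × (ZMod n → ℝ) × (ZMod n → ℝ)) :
    (ZMod n → ℝ) × (ZMod n → ℝ) × (ZMod n → ℝ) :=
  (p.1, Rmat1 n p.2.1 p.2.2 u, Rmat2 n p.2.1 p.2.2 u)


/-!
Put `φ(x,y,z)_i = (∏ y - ∏ x) / λ_i(x,y,z)`. The R-matrix adds `z_{i-1} φ_i` to `x_i`, subtracts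
`z_i φ_i` from `y_i` and swaps `∏ x` with `∏ y`, and `λ` telescopes to the cyclic recurrence
`y_i λ_i - x_{i+1} λ_{i+1} = z_i (∏ y - ∏ x)`, whose solution is unique as soon as `∏ x ≠ ∏ y`.

If two of `P = ∏ a`, `Q = ∏ b`, `S = ∏ c` agree, the braid relation holds because an R-matrix on
two strings with equal products is the identity and every R-matrix is an involution. Otherwise
let `L = λ(a,b,z)`, `M = λ(b',c,u)` with `b' = R(a,b,z)_2`, `N = λ(b,c,u)` and
`δ = φ(b',c,u) - φ(b,c,u)`. By uniqueness, the `λ`s of the last move on the left and of the last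
two moves on the right are `L_i N_{i-1} δ_{i-1} / (Q - P)`, `L_i M_{i-1} δ_{i-1} / (Q - P)` and
`(Q - P) / δ_i`, and with these the additive form of R gives the same weights on both sides.
-/

variable {n : ℕ}

theorem prod_range_natCast_add [NeZero n] {M : Type*} [CommMonoid M] (x : ZMod n → M) (i : ZMod n) :
    ∏ k ∈ Finset.range n, x (i + k) = ∏ j, x j := by
  refine Finset.prod_bij' (fun k _ => i + k) (fun j _ => (j - i).val)
    (fun _ _ => Finset.mem_univ _) (fun j _ => Finset.mem_range.2 (ZMod.val_lt _)) ?_ ?_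
    (fun _ _ => rfl)
  · intro k hk
    simp [ZMod.val_cast_of_lt (Finset.mem_range.1 hk)]
  · intro j _
    simp

theorem prod_Icc_one_natCast_add [NeZero n] {M : Type*} [CommMonoid M] (x : ZMod n → M)
    (i : ZMod n) :
    ∏ k ∈ Finset.Icc 1 n, x (i + k) = ∏ j, x j := by
  rw [← prod_range_natCast_add x (i + 1), Finset.range_eq_Ico, ← Finset.Ico_add_one_right_eq_Icc,
    ← Finset.prod_Ico_add' _ 0 n 1]
  refine Finset.prod_congr rfl fun k _ => ?_
  push_cast
  ring_nf

theorem prod_Icc_natCast_add_one {M : Type*} [CommMonoid M] (f : ZMod n → M) (i : ZMod n)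
    (a b : ℕ) :
    ∏ k ∈ Finset.Icc a b, f (i + 1 + k) = ∏ k ∈ Finset.Icc (a + 1) (b + 1), f (i + k) := by
  rw [← Finset.Ico_add_one_right_eq_Icc, ← Finset.Ico_add_one_right_eq_Icc,
    ← Finset.prod_Ico_add' _ a (b + 1) 1]
  refine Finset.prod_congr rfl fun k _ => ?_
  push_cast
  ring_nf

theorem lam_recurrence [NeZero n] (x y z : ZMod n → ℝ) (i : ZMod n) :
    y i * lam n x y z i - x (i + 1) * lam n x y z (i + 1) = z i * (∏ j, y j - ∏ j, x j) := by
  set t : ℕ → ℝ := fun j => (∏ k ∈ Finset.Icc 1 j, x (i + k)) * z (i + j) *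
      ∏ k ∈ Finset.Icc (j + 1) n, y (i + k)
  have hn : 0 < n := Nat.pos_of_neZero n
  have hleft : y i * lam n x y z i = ∑ j ∈ Finset.range n, t j := by
    rw [lam, Finset.mul_sum]
    refine Finset.sum_congr rfl fun j hj => ?_
    have htop := Finset.prod_Icc_succ_top (a := j + 1) (b := n - 1)
      (by have := Finset.mem_range.1 hj; omega) fun k => y (i + k)
    rw [Nat.sub_add_cancel hn, ZMod.natCast_self, add_zero] at htop
    simp only [t, htop]
    ring
  have hright : x (i + 1) * lam n x y z (i + 1) = ∑ j ∈ Finset.range n, t (j + 1) := by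
    rw [lam, Finset.mul_sum]
    refine Finset.sum_congr rfl fun j _ => ?_
    have hbot := Finset.prod_eq_prod_Ico_succ_bot (a := 1) (b := j + 1 + 1) (by omega)
      fun k => x (i + k)
    rw [Finset.Ico_add_one_right_eq_Icc, Finset.Ico_add_one_right_eq_Icc] at hbot
    simp only [t, prod_Icc_natCast_add_one, hbot, Nat.sub_add_cancel hn, Nat.cast_one]
    push_cast
    ring_nf
  have h0 : t 0 = z i * ∏ j, y j := by
    simp [t, prod_Icc_one_natCast_add]
  have htn : t n = z i * ∏ j, x j := by
    simp [t, prod_Icc_one_natCast_add, mul_comm]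
  rw [hleft, hright, ← Finset.sum_sub_distrib, Finset.sum_range_sub', h0, htn, mul_sub]

theorem eq_zero_of_forall_mul_eq_mul_add_one [NeZero n] {R : Type*} [CommRing R] [IsDomain R]
    {x y g : ZMod n → R} (hxy : ∏ j, x j ≠ ∏ j, y j)
    (hg : ∀ i, y i * g i = x (i + 1) * g (i + 1)) : g = 0 := by
  funext i
  have transport : ∀ m : ℕ, g i * ∏ k ∈ Finset.range m, y (i + k)
      = g (i + m) * ∏ k ∈ Finset.range m, x (i + 1 + k) := by
    intro m
    induction m with
    | zero => simp
    | succ m ih =>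
      have e : i + ((m + 1 : ℕ) : ZMod n) = i + m + 1 := by push_cast; ring
      rw [Finset.prod_range_succ, Finset.prod_range_succ, e, add_right_comm i 1]
      linear_combination y (i + m) * ih + (∏ k ∈ Finset.range m, x (i + 1 + k)) * hg (i + m)
  have h := transport n
  rw [ZMod.natCast_self, add_zero, prod_range_natCast_add, prod_range_natCast_add] at h
  have h' : g i * (∏ j, x j - ∏ j, y j) = 0 := by linear_combination -h
  exact (mul_eq_zero.1 h').resolve_right (sub_ne_zero.2 hxy)

theorem eq_lam_of_recurrence [NeZero n] {x y z f : ZMod n → ℝ} (hxy : ∏ j, x j ≠ ∏ j, y j)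
    (hf : ∀ i, y i * f i - x (i + 1) * f (i + 1) = z i * (∏ j, y j - ∏ j, x j)) :
    f = lam n x y z := by
  have h := eq_zero_of_forall_mul_eq_mul_add_one (g := f - lam n x y z) hxy fun i => by
    simp only [Pi.sub_apply]
    linear_combination hf i - lam_recurrence x y z i
  exact sub_eq_zero.1 h

theorem lam_pos [NeZero n] {x y z : ZMod n → ℝ} (hx : ∀ i, 0 < x i) (hy : ∀ i, 0 < y i)
    (hz : ∀ i, 0 < z i) (i : ZMod n) : 0 < lam n x y z i :=
  Finset.sum_pos (fun _ _ => mul_pos (mul_pos (Finset.prod_pos fun _ _ => hx _) (hz _))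
    (Finset.prod_pos fun _ _ => hy _)) ⟨0, Finset.mem_range.2 (Nat.pos_of_neZero n)⟩

theorem lam_ne_zero [NeZero n] {x y z : ZMod n → ℝ} (hx : ∀ i, 0 < x i) (hy : ∀ i, 0 < y i)
    (hz : ∀ i, 0 < z i) (i : ZMod n) : lam n x y z i ≠ 0 :=
  (lam_pos hx hy hz i).ne'

def phi (n : ℕ) [NeZero n] (x y z : ZMod n → ℝ) (i : ZMod n) : ℝ :=
  (∏ j, y j - ∏ j, x j) / lam n x y z i

section Rmat

variable [NeZero n] {x y z : ZMod n → ℝ} {i : ZMod n}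

theorem Rmat1_apply :
    Rmat1 n x y z i = y (i - 1) * lam n x y z (i - 1) / lam n x y z i := rfl

theorem Rmat2_apply :
    Rmat2 n x y z i = x (i + 1) * lam n x y z (i + 1) / lam n x y z i := rfl

theorem Rmat1_mul_lam (hlam : lam n x y z i ≠ 0) :
    Rmat1 n x y z i * lam n x y z i = y (i - 1) * lam n x y z (i - 1) :=
  div_mul_cancel₀ _ hlam

theorem Rmat2_mul_lam (hlam : lam n x y z i ≠ 0) :
    Rmat2 n x y z i * lam n x y z i = x (i + 1) * lam n x y z (i + 1) :=
  div_mul_cancel₀ _ hlam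

theorem Rmat1_eq_add (hlam : lam n x y z i ≠ 0) :
    Rmat1 n x y z i = x i + z (i - 1) * phi n x y z i := by
  have h := lam_recurrence x y z (i - 1)
  rw [sub_add_cancel] at h
  rw [Rmat1_apply, phi]
  field_simp
  linear_combination h

theorem Rmat2_eq_sub (hlam : lam n x y z i ≠ 0) :
    Rmat2 n x y z i = y i - z i * phi n x y z i := by
  rw [Rmat2_apply, phi]
  field_simp
  linear_combination -lam_recurrence x y z i

theorem prod_Rmat1 (hlam : ∀ i, lam n x y z i ≠ 0) : ∏ i, Rmat1 n x y z i = ∏ i, y i := by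
  simp only [Rmat1, Finset.prod_div_distrib, Finset.prod_mul_distrib,
    Fintype.prod_equiv (Equiv.subRight 1) (fun i => y (i - 1)) y (fun _ => rfl),
    Fintype.prod_equiv (Equiv.subRight 1) (fun i => lam n x y z (i - 1)) _ (fun _ => rfl)]
  exact mul_div_cancel_right₀ _ (Finset.prod_ne_zero_iff.2 fun i _ => hlam i)

theorem prod_Rmat2 (hlam : ∀ i, lam n x y z i ≠ 0) : ∏ i, Rmat2 n x y z i = ∏ i, x i := by
  simp only [Rmat2, Finset.prod_div_distrib, Finset.prod_mul_distrib,
    Fintype.prod_equiv (Equiv.addRight 1) (fun i => x (i + 1)) x (fun _ => rfl),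
    Fintype.prod_equiv (Equiv.addRight 1) (fun i => lam n x y z (i + 1)) _ (fun _ => rfl)]
  exact mul_div_cancel_right₀ _ (Finset.prod_ne_zero_iff.2 fun i _ => hlam i)

theorem phi_eq_zero (h : ∏ j, y j = ∏ j, x j) : phi n x y z = 0 := by
  funext i
  simp [phi, h]

theorem Rmat1_of_prod_eq (h : ∏ j, y j = ∏ j, x j) (hlam : ∀ i, lam n x y z i ≠ 0) :
    Rmat1 n x y z = x := by
  funext i
  simp [Rmat1_eq_add (hlam i), phi_eq_zero h]

theorem Rmat2_of_prod_eq (h : ∏ j, y j = ∏ j, x j) (hlam : ∀ i, lam n x y z i ≠ 0) :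
    Rmat2 n x y z = y := by
  funext i
  simp [Rmat2_eq_sub (hlam i), phi_eq_zero h]

theorem lam_Rmat (hlam : ∀ i, lam n x y z i ≠ 0) :
    lam n (Rmat1 n x y z) (Rmat2 n x y z) z = lam n x y z := by
  by_cases h : ∏ j, y j = ∏ j, x j
  · rw [Rmat1_of_prod_eq h hlam, Rmat2_of_prod_eq h hlam]
  refine (eq_lam_of_recurrence ?_ fun i => ?_).symm
  · rw [prod_Rmat1 hlam, prod_Rmat2 hlam]
    exact h
  · have h1 := Rmat1_mul_lam (i := i + 1) (hlam (i + 1))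
    rw [add_sub_cancel_right] at h1
    rw [prod_Rmat1 hlam, prod_Rmat2 hlam, Rmat2_mul_lam (hlam i), h1]
    linear_combination -lam_recurrence x y z i

theorem Rmat1_Rmat (hlam : ∀ i, lam n x y z i ≠ 0) :
    Rmat1 n (Rmat1 n x y z) (Rmat2 n x y z) z = x := by
  funext i
  have h := Rmat2_mul_lam (i := i - 1) (hlam (i - 1))
  rw [sub_add_cancel] at h
  rw [Rmat1_apply, lam_Rmat hlam, h, mul_div_cancel_right₀ _ (hlam i)]

theorem Rmat2_Rmat (hlam : ∀ i, lam n x y z i ≠ 0) :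
    Rmat2 n (Rmat1 n x y z) (Rmat2 n x y z) z = y := by
  funext i
  have h := Rmat1_mul_lam (i := i + 1) (hlam (i + 1))
  rw [add_sub_cancel_right] at h
  rw [Rmat2_apply, lam_Rmat hlam, h, mul_div_cancel_right₀ _ (hlam i)]

theorem Rmat1_pos (hx : ∀ i, 0 < x i) (hy : ∀ i, 0 < y i) (hz : ∀ i, 0 < z i) (i : ZMod n) :
    0 < Rmat1 n x y z i :=
  div_pos (mul_pos (hy _) (lam_pos hx hy hz _)) (lam_pos hx hy hz _)

theorem Rmat2_pos (hx : ∀ i, 0 < x i) (hy : ∀ i, 0 < y i) (hz : ∀ i, 0 < z i) (i : ZMod n) :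
    0 < Rmat2 n x y z i :=
  div_pos (mul_pos (hx _) (lam_pos hx hy hz _)) (lam_pos hx hy hz _)

end Rmat

section Moves

variable [NeZero n] {z u : ZMod n → ℝ} {p : (ZMod n → ℝ) × (ZMod n → ℝ) × (ZMod n → ℝ)}

theorem T12_of_prod_eq (h : ∏ j, p.2.1 j = ∏ j, p.1 j) (hlam : ∀ i, lam n p.1 p.2.1 z i ≠ 0) :
    T12 n z p = p := by
  simp [T12, Rmat1_of_prod_eq h hlam, Rmat2_of_prod_eq h hlam]

theorem T23_of_prod_eq (h : ∏ j, p.2.2 j = ∏ j, p.2.1 j) (hlam : ∀ i, lam n p.2.1 p.2.2 u i ≠ 0) :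
    T23 n u p = p := by
  simp [T23, Rmat1_of_prod_eq h hlam, Rmat2_of_prod_eq h hlam]

theorem T12_T12 (hlam : ∀ i, lam n p.1 p.2.1 z i ≠ 0) : T12 n z (T12 n z p) = p := by
  simp [T12, Rmat1_Rmat hlam, Rmat2_Rmat hlam]

theorem T23_T23 (hlam : ∀ i, lam n p.2.1 p.2.2 u i ≠ 0) : T23 n u (T23 n u p) = p := by
  simp [T23, Rmat1_Rmat hlam, Rmat2_Rmat hlam]

end Moves

section Braid

variable [NeZero n] {a b c z u : ZMod n → ℝ}
  (ha : ∀ i, 0 < a i) (hb : ∀ i, 0 < b i) (hc : ∀ i, 0 < c i)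
  (hz : ∀ i, 0 < z i) (hu : ∀ i, 0 < u i)
include ha hb hc hz hu

theorem braid_of_prod_eq_left (h : ∏ j, b j = ∏ j, a j) :
    T12 n z (T23 n u (T12 n z (a, b, c))) = T23 n u (T12 n z (T23 n u (a, b, c))) := by
  have hb' := Rmat1_pos hb hc hu
  rw [T12_of_prod_eq (p := (a, b, c)) h (lam_ne_zero ha hb hz)]
  refine (T23_of_prod_eq (p := T12 n z (T23 n u (a, b, c))) ?_
    (lam_ne_zero (Rmat2_pos ha hb' hz) (Rmat2_pos hb hc hu) hu)).symm
  change ∏ j, Rmat2 n b c u j = ∏ j, Rmat2 n a (Rmat1 n b c u) z j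
  rw [prod_Rmat2 (lam_ne_zero hb hc hu), prod_Rmat2 (lam_ne_zero ha hb' hz), h]

theorem braid_of_prod_eq_right (h : ∏ j, c j = ∏ j, b j) :
    T12 n z (T23 n u (T12 n z (a, b, c))) = T23 n u (T12 n z (T23 n u (a, b, c))) := by
  have hb' := Rmat2_pos ha hb hz
  rw [T23_of_prod_eq (p := (a, b, c)) h (lam_ne_zero hb hc hu)]
  refine T12_of_prod_eq (p := T23 n u (T12 n z (a, b, c))) ?_
    (lam_ne_zero (Rmat1_pos ha hb hz) (Rmat1_pos hb' hc hu) hz)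
  change ∏ j, Rmat1 n (Rmat2 n a b z) c u j = ∏ j, Rmat1 n a b z j
  rw [prod_Rmat1 (lam_ne_zero hb' hc hu), prod_Rmat1 (lam_ne_zero ha hb hz), h]

theorem braid_of_prod_eq_outer (h : ∏ j, c j = ∏ j, a j) :
    T12 n z (T23 n u (T12 n z (a, b, c))) = T23 n u (T12 n z (T23 n u (a, b, c))) := by
  have hb' := Rmat2_pos ha hb hz
  have hb'' := Rmat1_pos hb hc hu
  rw [T23_of_prod_eq (p := T12 n z (a, b, c)) ?_ (lam_ne_zero hb' hc hu),
    T12_of_prod_eq (p := T23 n u (a, b, c)) ?_ (lam_ne_zero ha hb'' hz),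
    T12_T12 (p := (a, b, c)) (lam_ne_zero ha hb hz),
    T23_T23 (p := (a, b, c)) (lam_ne_zero hb hc hu)]
  · change ∏ j, Rmat1 n b c u j = ∏ j, a j
    rw [prod_Rmat1 (lam_ne_zero hb hc hu), h]
  · change ∏ j, c j = ∏ j, Rmat2 n a b z j
    rw [prod_Rmat2 (lam_ne_zero ha hb hz), h]

theorem lam_lhs_third_move (hab : ∏ j, b j ≠ ∏ j, a j) (hbc : ∏ j, c j ≠ ∏ j, b j) (i : ZMod n) :
    lam n (Rmat1 n a b z) (Rmat1 n (Rmat2 n a b z) c u) z i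
      = lam n a b z i * lam n b c u (i - 1)
        * (phi n (Rmat2 n a b z) c u (i - 1) - phi n b c u (i - 1)) / (∏ j, b j - ∏ j, a j) := by
  have hL := lam_ne_zero ha hb hz
  have hM := lam_ne_zero (Rmat2_pos ha hb hz) hc hu
  have hN := lam_ne_zero hb hc hu
  have hprod_b1 := prod_Rmat2 hL
  refine congrFun (eq_lam_of_recurrence (f := fun i => lam n a b z i * lam n b c u (i - 1)
      * (phi n (Rmat2 n a b z) c u (i - 1) - phi n b c u (i - 1)) / (∏ j, b j - ∏ j, a j))
    ?_ fun i => ?_).symm i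
  · rw [prod_Rmat1 hL, prod_Rmat1 hM]
    exact hbc.symm
  have rL := lam_recurrence a b z i
  have rM := lam_recurrence (Rmat2 n a b z) c u (i - 1)
  have rN := lam_recurrence b c u (i - 1)
  have hb1L := Rmat2_mul_lam (hL i)
  rw [sub_add_cancel] at rM rN
  rw [prod_Rmat1 hL, prod_Rmat1 hM]
  simp only [phi, Rmat1_apply, add_sub_cancel_right, hprod_b1] at rM ⊢
  have := hL (i + 1)
  have := hM i
  have := hM (i - 1)
  have := hN i
  have := hN (i - 1)
  have := sub_ne_zero.2 hab
  generalize lam n a b z i = L at *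
  generalize lam n (Rmat2 n a b z) c u i = M at *
  generalize ∏ j, a j = P at *
  generalize ∏ j, b j = Q at *
  generalize ∏ j, c j = S at *
  field_simp
  linear_combination (S - P) * L * rN - (S - Q) * L * rM + (S - Q) * M * (rL - hb1L)

theorem phi_sub_phi_ne_zero (hab : ∏ j, b j ≠ ∏ j, a j) (hbc : ∏ j, c j ≠ ∏ j, b j) (i : ZMod n) :
    phi n (Rmat2 n a b z) c u i - phi n b c u i ≠ 0 := by
  intro h
  have hpos := lam_pos (Rmat1_pos ha hb hz) (Rmat1_pos (Rmat2_pos ha hb hz) hc hu) hz (i + 1)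
  rw [lam_lhs_third_move ha hb hc hz hu hab hbc, add_sub_cancel_right, h] at hpos
  simp at hpos

theorem lam_rhs_second_move (hab : ∏ j, b j ≠ ∏ j, a j) (hac : ∏ j, c j ≠ ∏ j, a j) (i : ZMod n) :
    lam n a (Rmat1 n b c u) z i
      = lam n a b z i * lam n (Rmat2 n a b z) c u (i - 1)
        * (phi n (Rmat2 n a b z) c u (i - 1) - phi n b c u (i - 1)) / (∏ j, b j - ∏ j, a j) := by
  have hL := lam_ne_zero ha hb hz
  have hM := lam_ne_zero (Rmat2_pos ha hb hz) hc hu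
  have hN := lam_ne_zero hb hc hu
  have hprod_b1 := prod_Rmat2 hL
  refine congrFun (eq_lam_of_recurrence (f := fun i => lam n a b z i
      * lam n (Rmat2 n a b z) c u (i - 1)
      * (phi n (Rmat2 n a b z) c u (i - 1) - phi n b c u (i - 1)) / (∏ j, b j - ∏ j, a j))
    ?_ fun i => ?_).symm i
  · rw [prod_Rmat1 hN]
    exact hac.symm
  have rL := lam_recurrence a b z i
  have rM := lam_recurrence (Rmat2 n a b z) c u (i - 1)
  have rN := lam_recurrence b c u (i - 1)
  have hb1L := Rmat2_mul_lam (hL i)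
  rw [sub_add_cancel] at rM rN
  rw [prod_Rmat1 hN]
  simp only [phi, Rmat1_apply, add_sub_cancel_right, hprod_b1] at rM hb1L ⊢
  have := hM i
  have := hM (i - 1)
  have := hN i
  have := hN (i - 1)
  have := sub_ne_zero.2 hab
  generalize lam n a b z i = L at *
  generalize lam n b c u i = N at *
  generalize lam n (Rmat2 n a b z) c u i = M at *
  generalize ∏ j, a j = P at *
  generalize ∏ j, b j = Q at *
  generalize ∏ j, c j = S at *
  field_simp
  linear_combination (S - P) * L * rN - (S - Q) * L * rM + (S - P) * N * rL - (S - Q) * M * hb1L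

theorem lam_rhs_third_move (hab : ∏ j, b j ≠ ∏ j, a j) (hbc : ∏ j, c j ≠ ∏ j, b j)
    (hac : ∏ j, c j ≠ ∏ j, a j) (i : ZMod n) :
    lam n (Rmat2 n a (Rmat1 n b c u) z) (Rmat2 n b c u) u i
      = (∏ j, b j - ∏ j, a j) / (phi n (Rmat2 n a b z) c u i - phi n b c u i) := by
  have hL := lam_ne_zero ha hb hz
  have hM := lam_ne_zero (Rmat2_pos ha hb hz) hc hu
  have hN := lam_ne_zero hb hc hu
  have hL' := lam_ne_zero ha (Rmat1_pos hb hc hu) hz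
  have hprod_b1 := prod_Rmat2 hL
  refine congrFun (eq_lam_of_recurrence (f := fun i => (∏ j, b j - ∏ j, a j)
      / (phi n (Rmat2 n a b z) c u i - phi n b c u i)) ?_ fun i => ?_).symm i
  · rw [prod_Rmat2 hL', prod_Rmat2 hN]
    exact hab.symm
  have rM := lam_recurrence (Rmat2 n a b z) c u i
  have rN := lam_recurrence b c u i
  have hb1L := Rmat2_mul_lam (hL (i + 1))
  have hδ := phi_sub_phi_ne_zero ha hb hc hz hu hab hbc i
  have hδ' := phi_sub_phi_ne_zero ha hb hc hz hu hab hbc (i + 1)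
  rw [prod_Rmat2 hL', prod_Rmat2 hN]
  rw [Rmat2_apply (x := a), Rmat2_apply (x := b), lam_rhs_second_move ha hb hc hz hu hab hac,
    lam_rhs_second_move ha hb hc hz hu hab hac, add_sub_cancel_right, add_sub_cancel_right]
  simp only [phi, hprod_b1] at rM hδ hδ' ⊢
  have := hL (i + 1)
  have := hM i
  have := hM (i + 1)
  have := hN i
  have := hN (i + 1)
  have := sub_ne_zero.2 hab
  generalize lam n (Rmat2 n a b z) c u i = M at *
  generalize lam n b c u i = N at *
  generalize lam n (Rmat2 n a b z) c u (i + 1) = M₁ at *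
  generalize lam n b c u (i + 1) = N₁ at *
  generalize lam n a b z (i + 1) = L₁ at *
  generalize ∏ j, a j = P at *
  generalize ∏ j, b j = Q at *
  generalize ∏ j, c j = S at *
  have hg : N * (S - P) - M * (S - Q) ≠ 0 := fun h => hδ (by
    rw [div_sub_div _ _ ‹M ≠ 0› ‹N ≠ 0›, div_eq_zero_iff]; left; linear_combination h)
  have hg' : N₁ * (S - P) - (S - Q) * M₁ ≠ 0 := fun h => hδ' (by
    rw [div_sub_div _ _ ‹M₁ ≠ 0› ‹N₁ ≠ 0›, div_eq_zero_iff]; left; linear_combination h)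
  field_simp
  linear_combination N * L₁ * rM - M * L₁ * rN + N * M₁ * hb1L

theorem phi_add_phi_lhs_third_move (hab : ∏ j, b j ≠ ∏ j, a j) (hbc : ∏ j, c j ≠ ∏ j, b j)
    (hac : ∏ j, c j ≠ ∏ j, a j) (i : ZMod n) :
    phi n a b z i + phi n (Rmat1 n a b z) (Rmat1 n (Rmat2 n a b z) c u) z i
      = phi n a (Rmat1 n b c u) z i := by
  have hL := lam_ne_zero ha hb hz
  have hM := lam_ne_zero (Rmat2_pos ha hb hz) hc hu
  have hN := lam_ne_zero hb hc hu
  have hδ := phi_sub_phi_ne_zero ha hb hc hz hu hab hbc (i - 1)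
  have hφM : phi n (Rmat2 n a b z) c u (i - 1) * lam n (Rmat2 n a b z) c u (i - 1)
      = ∏ j, c j - ∏ j, a j := by
    rw [phi, prod_Rmat2 hL, div_mul_cancel₀ _ (hM _)]
  have hφN : phi n b c u (i - 1) * lam n b c u (i - 1) = ∏ j, c j - ∏ j, b j :=
    div_mul_cancel₀ _ (hN _)
  simp only [phi]
  rw [lam_lhs_third_move ha hb hc hz hu hab hbc,
    lam_rhs_second_move ha hb hc hz hu hab hac, prod_Rmat1 hL,
    prod_Rmat1 hM, prod_Rmat1 hN]
  have := hL i
  have := hM (i - 1)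
  have := hN (i - 1)
  have := sub_ne_zero.2 hab
  field_simp
  linear_combination lam n b c u (i - 1) * hφM - lam n (Rmat2 n a b z) c u (i - 1) * hφN

theorem phi_rhs_third_move (hab : ∏ j, b j ≠ ∏ j, a j) (hbc : ∏ j, c j ≠ ∏ j, b j)
    (hac : ∏ j, c j ≠ ∏ j, a j) (i : ZMod n) :
    phi n (Rmat2 n a (Rmat1 n b c u) z) (Rmat2 n b c u) u i
      = phi n (Rmat2 n a b z) c u i - phi n b c u i := by
  rw [phi, lam_rhs_third_move ha hb hc hz hu hab hbc hac,
    prod_Rmat2 (lam_ne_zero ha (Rmat1_pos hb hc hu) hz),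
    prod_Rmat2 (lam_ne_zero hb hc hu)]
  exact div_div_cancel₀ (sub_ne_zero.2 hab)

theorem braid_of_prod_ne (hab : ∏ j, b j ≠ ∏ j, a j) (hbc : ∏ j, c j ≠ ∏ j, b j)
    (hac : ∏ j, c j ≠ ∏ j, a j) :
    T12 n z (T23 n u (T12 n z (a, b, c))) = T23 n u (T12 n z (T23 n u (a, b, c))) := by
  have ha1 := Rmat1_pos ha hb hz
  have hb1 := Rmat2_pos ha hb hz
  have hb2 := Rmat1_pos hb1 hc hu
  have hB1 := Rmat1_pos hb hc hu
  have hC1 := Rmat2_pos hb hc hu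
  have hB2 := Rmat2_pos ha hB1 hz
  have hA := phi_add_phi_lhs_third_move ha hb hc hz hu hab hbc hac
  have hC := phi_rhs_third_move ha hb hc hz hu hab hbc hac
  simp only [T12, T23, Prod.mk.injEq]
  refine ⟨funext fun i => ?_, funext fun i => ?_, funext fun i => ?_⟩
  · rw [Rmat1_eq_add (lam_ne_zero ha1 hb2 hz i), Rmat1_eq_add (lam_ne_zero ha hb hz i),
      Rmat1_eq_add (lam_ne_zero ha hB1 hz i)]
    linear_combination z (i - 1) * hA i
  · rw [Rmat2_eq_sub (lam_ne_zero ha1 hb2 hz i), Rmat1_eq_add (lam_ne_zero hb1 hc hu i),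
      Rmat2_eq_sub (lam_ne_zero ha hb hz i), Rmat1_eq_add (lam_ne_zero hB2 hC1 hu i),
      Rmat2_eq_sub (lam_ne_zero ha hB1 hz i), Rmat1_eq_add (lam_ne_zero hb hc hu i)]
    linear_combination -z i * hA i - u (i - 1) * hC i
  · rw [Rmat2_eq_sub (lam_ne_zero hb1 hc hu i), Rmat2_eq_sub (lam_ne_zero hB2 hC1 hu i),
      Rmat2_eq_sub (lam_ne_zero hb hc hu i)]
    linear_combination u i * hC i

end Braid

/-- the edge-weighted plabic R-matrix satisfies the braid relation
`T^{(1,2)} ∘ T^{(2,3)} ∘ T^{(1,2)} = T^{(2,3)} ∘ T^{(1,2)} ∘ T^{(2,3)}` on the string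
weights `(a,b,c)` of a fully generic cylindric 3-loop expanded directed plabic network. -/
theorem plabic_R_braid (n : ℕ) [NeZero n] (a b c z u : ZMod n → ℝ)
    (ha : ∀ i, 0 < a i) (hb : ∀ i, 0 < b i) (hc : ∀ i, 0 < c i)
    (hz : ∀ i, 0 < z i) (hu : ∀ i, 0 < u i) :
    T12 n z (T23 n u (T12 n z (a, b, c))) = T23 n u (T12 n z (T23 n u (a, b, c))) := by
  by_cases hab : ∏ j, b j = ∏ j, a j
  · exact braid_of_prod_eq_left ha hb hc hz hu hab
  by_cases hbc : ∏ j, c j = ∏ j, b j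
  · exact braid_of_prod_eq_right ha hb hc hz hu hbc
  by_cases hac : ∏ j, c j = ∏ j, a j
  · exact braid_of_prod_eq_outer ha hb hc hz hu hac
  exact braid_of_prod_ne ha hb hc hz hu hab hbc hac
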